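/- arXiv:2205.01442 — 4 statements merged into one kernel-verified Lean document; each statement's English description precedes it below -/
import Mathlib

section
/- Let d, n ≥ 1, let Λ_i := { λ ∈ ℝ^{n+1} : λ ≥ 0, Σ_{j=0}^n λ_j = 1 } be the standard simplex, and let Λ := Λ_1 × … × Λ_d. Let E := {0,…,n}^d and M^Λ := { (λ, w) ∈ Λ × ℝ^E : w_j = Π_{i=1}^d λ_{i,j_i} for every j = (j_1,…,j_d) ∈ E }. Then conv(M^Λ) = { (λ, w) ∈ ℝ^{d×(n+1)} × ℝ^E : w ≥ 0, Σ_{j ∈ E} w_j = 1, and λ_{i,k} = Σ_{j ∈ E : j_i = k} w_j for every i ∈ {1,…,d} and every k ∈ {0,…,n} }. -/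
open Finset

noncomputable section

theorem statement_11
    (d n : ℕ) (hd : 1 ≤ d) (hn : 1 ≤ n) :
    convexHull ℝ
        {p : (Fin d → Fin (n + 1) → ℝ) × ((Fin d → Fin (n + 1)) → ℝ) |
          (∀ i, (∀ k, 0 ≤ p.1 i k) ∧ ∑ k, p.1 i k = 1) ∧
          ∀ j : Fin d → Fin (n + 1), p.2 j = ∏ i, p.1 i (j i)} =
      {p : (Fin d → Fin (n + 1) → ℝ) × ((Fin d → Fin (n + 1)) → ℝ) |
        (∀ j, 0 ≤ p.2 j) ∧ (∑ j : Fin d → Fin (n + 1), p.2 j) = 1 ∧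
        ∀ (i : Fin d) (k : Fin (n + 1)),
          p.1 i k =
            ∑ j ∈ Finset.univ.filter (fun j : Fin d → Fin (n + 1) => j i = k), p.2 j} := by
  apply subset_antisymm
  · apply convexHull_min
    · rintro ⟨lam, w⟩ ⟨hlam, hw⟩
      have hw' : ∀ j : Fin d → Fin (n + 1), w j = ∏ i, lam i (j i) := hw
      have hlam' : ∀ i, (∀ k, 0 ≤ lam i k) ∧ ∑ k, lam i k = 1 := hlam
      clear hw hlam
      refine ⟨fun j => ?_, ?_, fun i k => ?_⟩
      · show 0 ≤ w j
        rw [hw' j]; exact Finset.prod_nonneg fun i _ => (hlam' i).1 (j i)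
      · simp only [Set.mem_setOf_eq]
        calc ∑ j : Fin d → Fin (n + 1), w j
            = ∑ j : Fin d → Fin (n + 1), ∏ i, lam i (j i) := by
              exact Finset.sum_congr rfl fun j _ => hw' j
          _ = ∏ i, ∑ k, lam i k := by
              rw [Finset.prod_univ_sum]
              simp [Fintype.piFinset_univ]
          _ = 1 := by simp [fun i => (hlam' i).2]
      · simp only [Set.mem_setOf_eq]
        have key : ∑ j ∈ Finset.univ.filter (fun j : Fin d → Fin (n + 1) => j i = k), w j
            = ∑ j : Fin d → Fin (n + 1), ∏ i',
                (if i' = i ∧ j i' ≠ k then 0 else lam i' (j i')) := by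
          rw [Finset.sum_filter]
          refine Finset.sum_congr rfl fun j _ => ?_
          by_cases h : j i = k
          · rw [if_pos h, hw' j]
            refine Finset.prod_congr rfl fun i' _ => ?_
            by_cases h' : i' = i
            · subst h'; simp [h]
            · simp [h']
          · rw [if_neg h]
            refine (Finset.prod_eq_zero (Finset.mem_univ i) ?_).symm
            simp [h]
        have hps := Finset.prod_univ_sum (t := fun _ : Fin d => (univ : Finset (Fin (n + 1))))
          (f := fun i' k' => if i' = i ∧ k' ≠ k then (0:ℝ) else lam i' k')
        rw [Fintype.piFinset_univ] at hps
        rw [key, ← hps, Finset.prod_eq_single_of_mem i (Finset.mem_univ i)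
            (fun i' _ h' => by simp [h', (hlam' i').2])]
        simp only [true_and]
        rw [Finset.sum_congr rfl (fun k' _ => show (if k' ≠ k then (0:ℝ) else lam i k') =
            if k' = k then lam i k' else 0 by by_cases h : k' = k <;> simp [h]),
          Finset.sum_ite_eq' Finset.univ k (lam i)]
        simp
    · intro p hp q hq a b ha hb hab
      obtain ⟨hp0, hp1, hpl⟩ := hp
      obtain ⟨hq0, hq1, hql⟩ := hq
      refine ⟨fun j => ?_, ?_, fun i k => ?_⟩
      · simp only [Prod.snd_add, Prod.smul_snd, Pi.add_apply, Pi.smul_apply, smul_eq_mul]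
        exact add_nonneg (mul_nonneg ha (hp0 j)) (mul_nonneg hb (hq0 j))
      · simp only [Prod.snd_add, Prod.smul_snd, Pi.add_apply, Pi.smul_apply, smul_eq_mul]
        rw [Finset.sum_add_distrib, ← Finset.mul_sum, ← Finset.mul_sum, hp1, hq1]
        linarith
      · simp only [Prod.fst_add, Prod.smul_fst, Prod.snd_add, Prod.smul_snd,
          Pi.add_apply, Pi.smul_apply, smul_eq_mul]
        rw [hpl i k, hql i k, Finset.mul_sum, Finset.mul_sum, ← Finset.sum_add_distrib]
  · rintro ⟨lam, w⟩ ⟨hw0, hw1, hlam⟩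
    have hlam2 : ∀ i k, lam i k = ∑ j ∈ Finset.univ.filter
        (fun j : Fin d → Fin (n + 1) => j i = k), w j := hlam
    set z : (Fin d → Fin (n + 1)) → (Fin d → Fin (n + 1) → ℝ) × ((Fin d → Fin (n + 1)) → ℝ) :=
      fun j => (fun i k => if j i = k then 1 else 0, fun j' => if ∀ i, j' i = j i then 1 else 0)
      with hz
    have hzmem : ∀ j, z j ∈
        {p : (Fin d → Fin (n + 1) → ℝ) × ((Fin d → Fin (n + 1)) → ℝ) |
          (∀ i, (∀ k, 0 ≤ p.1 i k) ∧ ∑ k, p.1 i k = 1) ∧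
          ∀ j : Fin d → Fin (n + 1), p.2 j = ∏ i, p.1 i (j i)} := by
      intro j
      refine ⟨fun i => ⟨fun k => by positivity, by simp [hz]⟩, fun j' => ?_⟩
      simp only [hz, Finset.prod_ite_eq', Finset.mem_univ, if_true]
      rw [Finset.prod_boole]
      by_cases h : ∀ i : Fin d, j' i = j i
      · rw [if_pos h, if_pos fun i _ => (h i).symm]
      · rw [if_neg h, if_neg fun hc => h fun i => (hc i (Finset.mem_univ i)).symm]
    have heq : (lam, w) = Finset.univ.centerMass w z := by
      rw [Finset.centerMass_eq_of_sum_1 _ _ hw1]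
      refine Prod.ext ?_ ?_
      · simp only [Prod.fst_sum]
        funext i k
        rw [Finset.sum_apply, Finset.sum_apply]
        simp only [hz, Prod.smul_fst, Pi.smul_apply, smul_eq_mul, mul_ite, mul_one, mul_zero]
        rw [hlam2 i k, Finset.sum_filter]
      · simp only [Prod.snd_sum]
        funext j'
        rw [Finset.sum_apply]
        simp only [hz, Prod.smul_snd, Pi.smul_apply, smul_eq_mul, mul_ite, mul_one, mul_zero]
        have : ∀ j, (∀ i, j' i = j i) ↔ j = j' := by
          intro j; constructor
          · intro h; funext i; exact (h i).symm
          · intro h; subst h; intro i; rfl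
        simp only [this]
        rw [Finset.sum_ite_eq' Finset.univ j' w]
        simp
    rw [heq]
    exact Finset.centerMass_mem_convexHull _ (fun j _ => hw0 j) (by rw [hw1]; norm_num)
      (fun j _ => hzmem j)
end
end

section
/- Let θ = (θ_1,…,θ_κ) : ℝ^d → ℝ^κ be a vector of multilinear functions, θ_k(y) = Σ_{I ∈ 𝓘_k} c^k_I Π_{i∈I} y_i, where each 𝓘_k is a collection of subsets of {1,…,d} and c^k_I ∈ ℝ, and let Θ^Q := { (s, θ(s_{1,n},…,s_{d,n})) : s ∈ Q } ⊆ ℝ^{d×(n+1)} × ℝ^κ. Then conv(Θ^Q) = { (s,θ) : there exists w ∈ ℝ^{{0,…,n}^d} with w ≥ 0, Σ_{j ∈ {0,…,n}^d} w_j = 1, s_i = Σ_{p=0}^{n} v_{i,p} · ( Σ_{j : j_i = p} w_j ) for every i ∈ {1,…,d}, and θ_k = Σ_{I ∈ 𝓘_k} c^k_I Σ_{j ∈ {0,…,n}^d} ( Π_{i∈I} a_{i,j_i} ) w_j for every k ∈ {1,…,κ} }. -/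
open Finset

noncomputable section

/-- The vertex `v_{i,j}` of the simplex `Q_i` : its `k`-th entry is `a_{i,min(j,k)}`. -/
def vvec (d n : ℕ) (a : Fin d → Fin (n + 1) → ℝ) (i : Fin d) (j : Fin (n + 1)) :
    Fin (n + 1) → ℝ :=
  fun k => a i (min j k)

/-- The simplotope `Q = Q_1 × ⋯ × Q_d`. -/
def Qset (d n : ℕ) (a : Fin d → Fin (n + 1) → ℝ) : Set (Fin d → Fin (n + 1) → ℝ) :=
  {s | ∀ i, s i ∈ convexHull ℝ {w | ∃ j, w = vvec d n a i j}}

/-!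
Give a point `s ∈ Q` barycentric coordinates `μ_i` in each simplex `Q_i`, and give the vertex
`(v_{1,j_1}, …, v_{d,j_d})` of `Q` the product weight `w_j = ∏ᵢ μ_i(j_i)`. The marginals of `w`
are the `μ_i`, so `w` reproduces `s`; and since `s_{i,n} = ∑_q μ_i(q) a_{i,q}` and each `θ_k` is
multilinear, `w` also reproduces `θ(s_{1,n}, …, s_{d,n})`. Hence `Θ^Q` lies in the convex hull of
its `(n+1)^d` points over the vertices of `Q`, whose convex combinations are the right-hand side.
-/
section ProductWeights

variable {ι α R : Type*} [Fintype ι] [DecidableEq ι] [Fintype α] [CommSemiring R]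

theorem sum_prod_mul_prod_eq_prod_sum (μ : ι → α → R) (hμ : ∀ i, ∑ q, μ i q = 1)
    (g : ι → α → R) (I : Finset ι) :
    ∑ j : ι → α, (∏ i ∈ I, g i (j i)) * ∏ i, μ i (j i) = ∏ i ∈ I, ∑ q, μ i q * g i q := by
  calc _ = ∑ j : ι → α, ∏ i, (if i ∈ I then g i (j i) else 1) * μ i (j i) := by
          simp_rw [prod_mul_distrib, prod_ite_mem, univ_inter]
    _ = ∏ i, ∑ q, (if i ∈ I then g i q else 1) * μ i q := by rw [Fintype.prod_sum]
    _ = ∏ i, if i ∈ I then ∑ q, μ i q * g i q else 1 := by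
          congr with i
          split_ifs
          · simp_rw [mul_comm]
          · simp_rw [one_mul, hμ]
    _ = _ := by rw [prod_ite_mem, univ_inter]

theorem sum_prod_filter_apply_eq [DecidableEq α] (μ : ι → α → R) (hμ : ∀ i, ∑ q, μ i q = 1)
    (i₀ : ι) (q : α) :
    ∑ j : ι → α with j i₀ = q, ∏ i, μ i (j i) = μ i₀ q := by
  simpa [sum_filter] using
    sum_prod_mul_prod_eq_prod_sum μ hμ (fun _ p => if p = q then 1 else 0) {i₀}

theorem sum_smul_apply_eq_sum_fiber_smul [DecidableEq α] {M : Type*} [AddCommMonoid M]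
    [Module R M] (w : (ι → α) → R) (f : α → M) (i : ι) :
    ∑ j, w j • f (j i) = ∑ q, (∑ j : ι → α with j i = q, w j) • f q := by
  rw [← sum_fiberwise univ (fun j => j i)]
  refine sum_congr rfl fun q _ => ?_
  rw [sum_smul]
  exact sum_congr rfl fun j hj => by rw [(mem_filter.1 hj).2]

end ProductWeights

theorem prod_mem_stdSimplex {ι α R : Type*} [Fintype ι] [DecidableEq ι] [Fintype α]
    [CommSemiring R] [PartialOrder R] [IsOrderedRing R] {μ : ι → α → R}
    (hμ : ∀ i, μ i ∈ stdSimplex R α) :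
    (fun j : ι → α => ∏ i, μ i (j i)) ∈ stdSimplex R (ι → α) := by
  refine ⟨fun j => prod_nonneg fun i _ => (hμ i).1 (j i), ?_⟩
  rw [← Fintype.prod_sum]
  exact prod_eq_one fun i _ => (hμ i).2

theorem convexHull_range_eq_image_stdSimplex {ι R E : Type*} [Fintype ι] [Field R]
    [LinearOrder R] [IsStrictOrderedRing R] [AddCommGroup E] [Module R E] (v : ι → E) :
    convexHull R (Set.range v) = (fun w => ∑ i, w i • v i) '' stdSimplex R ι := by
  classical
  have hv : Set.range v = Fintype.linearCombination R v '' Set.range fun i => Pi.single i 1 := by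
    rw [← Set.range_comp]
    congr with i
    simp [Fintype.linearCombination_apply_single]
  rw [hv, ← LinearMap.image_convexHull, convexHull_rangle_single_eq_stdSimplex]
  rfl

section Lifting

variable {d n κ : ℕ} (a : Fin d → Fin (n + 1) → ℝ) (Icoll : Fin κ → Finset (Finset (Fin d)))
  (c : Fin κ → Finset (Fin d) → ℝ)

def thetaQ : Set ((Fin d → Fin (n + 1) → ℝ) × (Fin κ → ℝ)) :=
  {p | p.1 ∈ Qset d n a ∧
    ∀ k, p.2 k = ∑ I ∈ Icoll k, c k I * ∏ i ∈ I, p.1 i (Fin.last n)}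

def liftedVertex (j : Fin d → Fin (n + 1)) : (Fin d → Fin (n + 1) → ℝ) × (Fin κ → ℝ) :=
  (fun i => vvec d n a i (j i), fun k => ∑ I ∈ Icoll k, c k I * ∏ i ∈ I, a i (j i))

theorem vvec_apply_last (i : Fin d) (j : Fin (n + 1)) : vvec d n a i j (Fin.last n) = a i j := by
  rw [vvec, min_eq_left (Fin.le_last j)]

theorem liftedVertex_mem_thetaQ (j : Fin d → Fin (n + 1)) :
    liftedVertex a Icoll c j ∈ thetaQ a Icoll c :=
  ⟨fun i => subset_convexHull ℝ _ ⟨j i, rfl⟩, fun k => by simp [liftedVertex, vvec_apply_last]⟩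

theorem fst_sum_smul_liftedVertex (w : (Fin d → Fin (n + 1)) → ℝ) (i : Fin d) :
    (∑ j, w j • liftedVertex a Icoll c j).1 i =
      ∑ q, (∑ j : Fin d → Fin (n + 1) with j i = q, w j) • vvec d n a i q := by
  rw [Prod.fst_sum, Finset.sum_apply]
  exact sum_smul_apply_eq_sum_fiber_smul w (vvec d n a i) i

theorem snd_sum_smul_liftedVertex (w : (Fin d → Fin (n + 1)) → ℝ) (k : Fin κ) :
    (∑ j, w j • liftedVertex a Icoll c j).2 k =
      ∑ I ∈ Icoll k, c k I * ∑ j, (∏ i ∈ I, a i (j i)) * w j := by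
  simp only [Prod.snd_sum, Finset.sum_apply, Prod.smul_snd, Pi.smul_apply, liftedVertex,
    smul_eq_mul, mul_sum]
  rw [sum_comm]
  exact sum_congr rfl fun I _ => sum_congr rfl fun j _ => by ring

theorem thetaQ_subset_convexHull_range_liftedVertex :
    thetaQ a Icoll c ⊆ convexHull ℝ (Set.range (liftedVertex a Icoll c)) := by
  rintro p ⟨hQ, hθ⟩
  have hcoord : ∀ i, ∃ μ ∈ stdSimplex ℝ (Fin (n + 1)), ∑ q, μ q • vvec d n a i q = p.1 i := by
    intro i
    have hrange : {w | ∃ j, w = vvec d n a i j} = Set.range (vvec d n a i) := by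
      ext; simp [eq_comm]
    simpa [hrange, convexHull_range_eq_image_stdSimplex] using hQ i
  choose μ hμ hμp using hcoord
  have hμ1 : ∀ i, ∑ q, μ i q = 1 := fun i => (hμ i).2
  rw [convexHull_range_eq_image_stdSimplex]
  refine ⟨_, prod_mem_stdSimplex hμ, Prod.ext (funext fun i => ?_) (funext fun k => ?_)⟩
  · rw [fst_sum_smul_liftedVertex, ← hμp]
    simp_rw [sum_prod_filter_apply_eq μ hμ1]
  · have hlast : ∀ i, p.1 i (Fin.last n) = ∑ q, μ i q * a i q := fun i => by
      simp [← hμp, Finset.sum_apply, vvec_apply_last]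
    rw [snd_sum_smul_liftedVertex, hθ]
    simp_rw [hlast, sum_prod_mul_prod_eq_prod_sum μ hμ1]

theorem convexHull_thetaQ :
    convexHull ℝ (thetaQ a Icoll c) = convexHull ℝ (Set.range (liftedVertex a Icoll c)) :=
  (convexHull_min (thetaQ_subset_convexHull_range_liftedVertex a Icoll c)
    (convex_convexHull ℝ _)).antisymm
    (convexHull_mono (Set.range_subset_iff.2 (liftedVertex_mem_thetaQ a Icoll c)))

end Lifting

theorem statement_12_general
    (d n κ : ℕ)
    (a : Fin d → Fin (n + 1) → ℝ)
    (Icoll : Fin κ → Finset (Finset (Fin d)))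
    (c : Fin κ → Finset (Fin d) → ℝ) :
    convexHull ℝ
        {p : (Fin d → Fin (n + 1) → ℝ) × (Fin κ → ℝ) |
          p.1 ∈ Qset d n a ∧
          ∀ k : Fin κ, p.2 k =
            ∑ I ∈ Icoll k, c k I * ∏ i ∈ I, p.1 i (Fin.last n)} =
      {p : (Fin d → Fin (n + 1) → ℝ) × (Fin κ → ℝ) |
        ∃ w : (Fin d → Fin (n + 1)) → ℝ,
          (∀ j, 0 ≤ w j) ∧ (∑ j : Fin d → Fin (n + 1), w j) = 1 ∧
          (∀ i : Fin d, p.1 i =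
            ∑ q : Fin (n + 1),
              (∑ j ∈ Finset.univ.filter (fun j : Fin d → Fin (n + 1) => j i = q), w j) •
                vvec d n a i q) ∧
          ∀ k : Fin κ, p.2 k =
            ∑ I ∈ Icoll k, c k I *
              ∑ j : Fin d → Fin (n + 1), (∏ i ∈ I, a i (j i)) * w j} := by
  change convexHull ℝ (thetaQ a Icoll c) = _
  rw [convexHull_thetaQ, convexHull_range_eq_image_stdSimplex]
  ext p
  constructor
  · rintro ⟨w, ⟨hw0, hw1⟩, rfl⟩
    exact ⟨w, hw0, hw1, fst_sum_smul_liftedVertex a Icoll c w,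
      snd_sum_smul_liftedVertex a Icoll c w⟩
  · rintro ⟨w, hw0, hw1, hfst, hsnd⟩
    refine ⟨w, ⟨hw0, hw1⟩, Prod.ext (funext fun i => ?_) (funext fun k => ?_)⟩
    · rw [fst_sum_smul_liftedVertex, hfst]
    · rw [snd_sum_smul_liftedVertex, hsnd]

theorem statement_12
    (d n κ : ℕ) (hd : 1 ≤ d) (hn : 1 ≤ n)
    (a : Fin d → Fin (n + 1) → ℝ) (ha : ∀ i, StrictMono (a i))
    (Icoll : Fin κ → Finset (Finset (Fin d)))
    (c : Fin κ → Finset (Fin d) → ℝ) :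
    convexHull ℝ
        {p : (Fin d → Fin (n + 1) → ℝ) × (Fin κ → ℝ) |
          p.1 ∈ Qset d n a ∧
          ∀ k : Fin κ, p.2 k =
            ∑ I ∈ Icoll k, c k I * ∏ i ∈ I, p.1 i (Fin.last n)} =
      {p : (Fin d → Fin (n + 1) → ℝ) × (Fin κ → ℝ) |
        ∃ w : (Fin d → Fin (n + 1)) → ℝ,
          (∀ j, 0 ≤ w j) ∧ (∑ j : Fin d → Fin (n + 1), w j) = 1 ∧
          (∀ i : Fin d, p.1 i =
            ∑ q : Fin (n + 1),
              (∑ j ∈ Finset.univ.filter (fun j : Fin d → Fin (n + 1) => j i = q), w j) •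
                vvec d n a i q) ∧
          ∀ k : Fin κ, p.2 k =
            ∑ I ∈ Icoll k, c k I *
              ∑ j : Fin d → Fin (n + 1), (∏ i ∈ I, a i (j i)) * w j} :=
  statement_12_general d n κ a Icoll c
end
end

section
/- With the notation below: (1) for z ∈ ℝ^{d×(n+1)}, there exists a binary vector δ ∈ {0,1}^{Σ_i (l_i−1)} such that (z,δ) satisfies (Inc-1) if and only if z ∈ Δ_{H} for some H ∈ 𝓗; and (2) for every t ∈ Π_{i=1}^d {1,…,l_i} and every z ∈ Δ_{H_t}, F_i(z_i) ∈ [a_{i,τ(i,t_i−1)}, a_{i,τ(i,t_i)}] for every i ∈ {1,…,d}, i.e., F maps Δ_{H_t} into H_t. -/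
open Finset

noncomputable section

/-- Coercion of a natural number `k ≤ n` into `Fin (n+1)`. -/
def toIdx (n k : ℕ) : Fin (n + 1) := ⟨min k n, Nat.lt_succ_of_le (Nat.min_le_right k n)⟩

/-- Membership in `Δ = Δ_1 × ⋯ × Δ_d`: each row satisfies `1 = z_0 ≥ z_1 ≥ … ≥ z_n ≥ 0`. -/
def memDelta (d n : ℕ) (z : Fin d → Fin (n + 1) → ℝ) : Prop :=
  ∀ i, z i 0 = 1 ∧ Antitone (z i) ∧ 0 ≤ z i (Fin.last n)

/-- The constraint system (Inc-1): `z ∈ Δ` and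
`z_{i,τ(i,t)} ≥ δ_{i,t} ≥ z_{i,τ(i,t)+1}` for `t ∈ {1,…,l_i − 1}`
(the variable `δ i t` stands for `δ_{i,t+1}` of the paper). -/
def Inc1 (d n : ℕ) (l : Fin d → ℕ) (τ : Fin d → ℕ → ℕ)
    (z : Fin d → Fin (n + 1) → ℝ) (δ : ∀ i : Fin d, Fin (l i - 1) → ℝ) : Prop :=
  memDelta d n z ∧
    ∀ (i : Fin d) (t : Fin (l i - 1)),
      δ i t ≤ z i (toIdx n (τ i ((t : ℕ) + 1))) ∧
        z i (toIdx n (τ i ((t : ℕ) + 1) + 1)) ≤ δ i t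

/-- The face `Δ_H` of `Δ` associated to the subcube `H_t ∈ 𝓗`. -/
def memFace (d n : ℕ) (τ : Fin d → ℕ → ℕ) (t : Fin d → ℕ)
    (z : Fin d → Fin (n + 1) → ℝ) : Prop :=
  memDelta d n z ∧
    ∀ i, (∀ j : Fin (n + 1), (j : ℕ) ≤ τ i (t i - 1) → z i j = 1) ∧
      ∀ j : Fin (n + 1), τ i (t i) < (j : ℕ) → z i j = 0

/-- `F_i(z_i) = a_{i,0} z_{i,0} + Σ_{j=1}^n (a_{i,j} − a_{i,j−1}) z_{i,j}`. -/
def Fmap (d n : ℕ) (a : Fin d → Fin (n + 1) → ℝ) (z : Fin d → Fin (n + 1) → ℝ) :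
    Fin d → ℝ :=
  fun i => a i 0 * z i 0 + ∑ j : Fin n, (a i j.succ - a i j.castSucc) * z i j.succ

/- ### Auxiliary lemmas -/

lemma toIdx_val {n k : ℕ} (h : k ≤ n) : ((toIdx n k : Fin (n + 1)) : ℕ) = k := by
  simp [toIdx, Nat.min_eq_left h]

lemma memDelta_le_one {d n : ℕ} {z : Fin d → Fin (n + 1) → ℝ} (hz : memDelta d n z)
    (i : Fin d) (j : Fin (n + 1)) : z i j ≤ 1 := by
  have h := (hz i).2.1 (Fin.zero_le j)
  rw [(hz i).1] at h
  exact h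

lemma memDelta_nonneg {d n : ℕ} {z : Fin d → Fin (n + 1) → ℝ} (hz : memDelta d n z)
    (i : Fin d) (j : Fin (n + 1)) : 0 ≤ z i j :=
  le_trans (hz i).2.2 ((hz i).2.1 (Fin.le_last j))

theorem statement_13
    (d n : ℕ) (hd : 1 ≤ d) (hn : 1 ≤ n)
    (a : Fin d → Fin (n + 1) → ℝ) (ha : ∀ i, StrictMono (a i))
    (l : Fin d → ℕ) (hl : ∀ i, 1 ≤ l i)
    (τ : Fin d → ℕ → ℕ)
    (hτ0 : ∀ i, τ i 0 = 0) (hτl : ∀ i, τ i (l i) = n)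
    (hτmono : ∀ i, ∀ t, t < l i → τ i t < τ i (t + 1)) :
    (∀ z : Fin d → Fin (n + 1) → ℝ,
      (∃ δ : ∀ i : Fin d, Fin (l i - 1) → ℝ,
        (∀ i t, δ i t = 0 ∨ δ i t = 1) ∧ Inc1 d n l τ z δ) ↔
      ∃ t : Fin d → ℕ, (∀ i, 1 ≤ t i ∧ t i ≤ l i) ∧ memFace d n τ t z) ∧
    (∀ t : Fin d → ℕ, (∀ i, 1 ≤ t i ∧ t i ≤ l i) →
      ∀ z : Fin d → Fin (n + 1) → ℝ, memFace d n τ t z → ∀ i,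
        Fmap d n a z i ∈
          Set.Icc (a i (toIdx n (τ i (t i - 1)))) (a i (toIdx n (τ i (t i))))) := by
  -- monotonicity facts about τ
  have τle : ∀ i : Fin d, ∀ s' : ℕ, s' ≤ l i → ∀ s : ℕ, s ≤ s' → τ i s ≤ τ i s' := by
    intro i s'
    induction s' with
    | zero => intro _ s hs; rw [Nat.le_zero.mp hs]
    | succ m ih =>
      intro hm s hs
      rcases Nat.eq_or_lt_of_le hs with h | h
      · exact h ▸ le_rfl
      · exact le_trans (ih (by omega) s (by omega)) (le_of_lt (hτmono i m (by omega)))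
  have τlt : ∀ i : Fin d, ∀ s s' : ℕ, s < s' → s' ≤ l i → τ i s < τ i s' := by
    intro i s s' h h'
    exact lt_of_lt_of_le (hτmono i s (by omega)) (τle i s' h' (s + 1) (by omega))
  have τn : ∀ i : Fin d, ∀ s : ℕ, s ≤ l i → τ i s ≤ n := by
    intro i s h
    have := τle i (l i) le_rfl s h
    rwa [hτl i] at this
  have τn' : ∀ i : Fin d, ∀ s : ℕ, s < l i → τ i s < n := by
    intro i s h
    have := τlt i s (l i) h le_rfl
    rwa [hτl i] at this
  constructor
  · -- Part (1)
    intro z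
    constructor
    · -- binary δ satisfying Inc1 → z on some face
      rintro ⟨δ, hbin, hΔ, hcons⟩
      -- δ is "antitone"
      have hanti : ∀ i : Fin d, ∀ s s' : Fin (l i - 1), (s : ℕ) ≤ (s' : ℕ) → δ i s' = 1 →
          δ i s = 1 := by
        intro i s s' hss h1
        rcases hbin i s with h0 | h
        · exfalso
          rcases Nat.eq_or_lt_of_le hss with heq | hlt
          · have : s = s' := Fin.ext heq
            rw [this, h1] at h0; norm_num at h0
          · have hc1 := (hcons i s).2
            have hc2 := (hcons i s').1
            have hs'l : (s' : ℕ) + 1 ≤ l i := by have := s'.isLt; omega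
            have h3 : τ i ((s : ℕ) + 1) < τ i ((s' : ℕ) + 1) := τlt i _ _ (by omega) hs'l
            have hτs' : τ i ((s' : ℕ) + 1) ≤ n := τn i _ hs'l
            have hτs : τ i ((s : ℕ) + 1) + 1 ≤ n := by omega
            have hle : toIdx n (τ i ((s : ℕ) + 1) + 1) ≤ toIdx n (τ i ((s' : ℕ) + 1)) := by
              rw [Fin.le_def, toIdx_val hτs, toIdx_val hτs']
              omega
            have hmono := (hΔ i).2.1 hle
            rw [h1] at hc2
            rw [h0] at hc1
            linarith
        · exact h
      have hcard : ∀ i : Fin d, (univ.filter fun s => δ i s = 1).card ≤ l i - 1 := by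
        intro i
        calc (univ.filter fun s => δ i s = 1).card ≤ (univ : Finset (Fin (l i - 1))).card :=
              Finset.card_filter_le _ _
          _ = l i - 1 := by simp
      have hA : ∀ i : Fin d, ∀ s : Fin (l i - 1),
          (s : ℕ) < (univ.filter fun s => δ i s = 1).card → δ i s = 1 := by
        intro i s hs
        rcases hbin i s with h0 | h1
        · exfalso
          have hsub : (univ.filter fun s' => δ i s' = 1) ⊆ Finset.Iio s := by
            intro s' hs'
            simp only [mem_filter, mem_univ, true_and] at hs'
            simp only [Finset.mem_Iio]
            by_contra hle
            push_neg at hle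
            have := hanti i s s' (Fin.le_def.mp hle) hs'
            rw [this] at h0; norm_num at h0
          have hcc := Finset.card_le_card hsub
          rw [Fin.card_Iio] at hcc
          omega
        · exact h1
      have hB : ∀ i : Fin d, ∀ s : Fin (l i - 1),
          (univ.filter fun s => δ i s = 1).card ≤ (s : ℕ) → δ i s = 0 := by
        intro i s hs
        rcases hbin i s with h0 | h1
        · exact h0
        · exfalso
          have hsub : Finset.Iic s ⊆ univ.filter fun s' => δ i s' = 1 := by
            intro s' hs'
            simp only [Finset.mem_Iic] at hs'
            simp only [mem_filter, mem_univ, true_and]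
            exact hanti i s' s (Fin.le_def.mp hs') h1
          have hcc := Finset.card_le_card hsub
          rw [Fin.card_Iic] at hcc
          omega
      refine ⟨fun i => (univ.filter fun s => δ i s = 1).card + 1,
        fun i => ⟨by show 1 ≤ _ + 1; omega,
          by show #(univ.filter fun s => δ i s = 1) + 1 ≤ l i
             have := hcard i; have := hl i; omega⟩, hΔ, fun i => ⟨?_, ?_⟩⟩
      · -- z i j = 1 for j ≤ τ i m
        intro j hj
        beta_reduce at hj
        rw [Nat.add_sub_cancel] at hj
        set m := (univ.filter fun s => δ i s = 1).card with hm
        rcases Nat.eq_zero_or_pos m with h0 | hpos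
        · rw [h0, hτ0 i] at hj
          have hj0 : j = 0 := Fin.ext (by simpa using hj)
          rw [hj0]; exact (hΔ i).1
        · have hmlt : m - 1 < l i - 1 := by have := hcard i; have := hl i; omega
          have hδ1 : δ i ⟨m - 1, hmlt⟩ = 1 := hA i ⟨m - 1, hmlt⟩ (by simp; omega)
          have hc := (hcons i ⟨m - 1, hmlt⟩).1
          have hs1 : ((⟨m - 1, hmlt⟩ : Fin (l i - 1)) : ℕ) + 1 = m := by simp; omega
          rw [hs1, hδ1] at hc
          have hτm : τ i m ≤ n := τn i m (by have := hcard i; have := hl i; omega)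
          have hle : j ≤ toIdx n (τ i m) := Fin.le_def.mpr (by rw [toIdx_val hτm]; exact hj)
          have h1 := (hΔ i).2.1 hle
          have h2 := memDelta_le_one hΔ i j
          linarith
      · -- z i j = 0 for j > τ i (m+1)
        intro j hj
        beta_reduce at hj
        set m := (univ.filter fun s => δ i s = 1).card with hm
        rcases Nat.eq_or_lt_of_le (hcard i) with he | hlt'
        · exfalso
          have hml : m + 1 = l i := by have := hl i; omega
          rw [hml, hτl i] at hj
          have := j.isLt; omega
        · have hmlt : m < l i - 1 := hlt'
          have hδ0 : δ i ⟨m, hmlt⟩ = 0 := hB i ⟨m, hmlt⟩ (by simp; omega)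
          have hc := (hcons i ⟨m, hmlt⟩).2
          rw [hδ0] at hc
          have hτ1 : τ i (m + 1) < n := τn' i (m + 1) (by omega)
          have hle : toIdx n (τ i (((⟨m, hmlt⟩ : Fin (l i - 1)) : ℕ) + 1) + 1) ≤ j := by
            rw [Fin.le_def, toIdx_val (by show τ i (m + 1) + 1 ≤ n; omega)]
            show τ i (m + 1) + 1 ≤ (j : ℕ)
            omega
          have hmono := (hΔ i).2.1 hle
          have h0 := memDelta_nonneg hΔ i j
          linarith
    · -- z on a face → ∃ binary δ satisfying Inc1
      rintro ⟨t, ht, hΔ, hface⟩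
      refine ⟨fun i s => if (s : ℕ) + 2 ≤ t i then 1 else 0,
        fun i s => by by_cases h : (s : ℕ) + 2 ≤ t i <;> simp [h], hΔ, ?_⟩
      intro i s
      have ht1 := (ht i).1
      have ht2 := (ht i).2
      have hsl : (s : ℕ) + 1 ≤ l i - 1 := s.isLt
      have hl1 := hl i
      by_cases h : (s : ℕ) + 2 ≤ t i
      · simp only [h, if_pos]
        constructor
        · have hτs : τ i ((s : ℕ) + 1) ≤ n := τn i _ (by omega)
          have hz1 : z i (toIdx n (τ i ((s : ℕ) + 1))) = 1 := by
            apply (hface i).1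
            rw [toIdx_val hτs]
            exact τle i (t i - 1) (by omega) ((s : ℕ) + 1) (by omega)
          rw [hz1]
        · exact memDelta_le_one hΔ i _
      · simp only [h, if_neg, not_false_iff]
        constructor
        · exact memDelta_nonneg hΔ i _
        · have hτs : τ i ((s : ℕ) + 1) < n := τn' i _ (by omega)
          have hz0 : z i (toIdx n (τ i ((s : ℕ) + 1) + 1)) = 0 := by
            apply (hface i).2
            rw [toIdx_val (by omega)]
            have : τ i (t i) ≤ τ i ((s : ℕ) + 1) := τle i _ (by omega) _ (by omega)
            omega
          rw [hz0]
  · -- Part (2)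
    intro t ht z hz i
    obtain ⟨hΔ, hface⟩ := hz
    have ht1 := (ht i).1
    have ht2 := (ht i).2
    set k0 := τ i (t i - 1) with hk0
    set k1 := τ i (t i) with hk1
    have hk0n : k0 ≤ n := τn i _ (by omega)
    have hk1n : k1 ≤ n := τn i _ ht2
    have hk01 : k0 ≤ k1 := τle i (t i) ht2 (t i - 1) (by omega)
    -- rewrite sum over Fin n as sum over range n
    set g : ℕ → ℝ := fun j => (a i (toIdx n (j + 1)) - a i (toIdx n j)) * z i (toIdx n (j + 1))
      with hg
    have hsum : (∑ j : Fin n, (a i j.succ - a i j.castSucc) * z i j.succ)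
        = ∑ j ∈ Finset.range n, g j := by
      rw [← Fin.sum_univ_eq_sum_range g n]
      refine Finset.sum_congr rfl fun j _ => ?_
      have h1 : toIdx n ((j : ℕ) + 1) = j.succ := by
        apply Fin.ext
        rw [toIdx_val (Nat.succ_le_of_lt j.isLt)]
        simp
      have h2 : toIdx n (j : ℕ) = j.castSucc := by
        apply Fin.ext
        rw [toIdx_val (le_of_lt j.isLt)]
        simp
      rw [hg]
      simp only [h1, h2]
    have ha0 : a i 0 = a i (toIdx n 0) := by
      congr 1
    have hgpos : ∀ j : ℕ, j < n → 0 ≤ g j := by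
      intro j hjn
      apply mul_nonneg _ (memDelta_nonneg hΔ i _)
      have : toIdx n j < toIdx n (j + 1) := by
        rw [Fin.lt_def, toIdx_val (le_of_lt hjn), toIdx_val hjn]
        omega
      linarith [ha i this]
    have hsplit : ∀ k : ℕ, k ≤ n → (∑ j ∈ Finset.range n, g j)
        = (∑ j ∈ Finset.range k, g j) + ∑ j ∈ Finset.Ico k n, g j := by
      intro k hk
      rw [Finset.range_eq_Ico, Finset.range_eq_Ico]
      exact (Finset.sum_Ico_consecutive _ (Nat.zero_le k) hk).symm
    have htel : ∀ k : ℕ, (∑ j ∈ Finset.range k, (a i (toIdx n (j + 1)) - a i (toIdx n j)))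
        = a i (toIdx n k) - a i (toIdx n 0) :=
      fun k => Finset.sum_range_sub (fun m => a i (toIdx n m)) k
    constructor
    · -- lower bound
      simp only [Fmap]
      rw [hsum, hsplit k0 hk0n, (hΔ i).1, mul_one, ha0]
      have h1 : (∑ j ∈ Finset.range k0, g j)
          = ∑ j ∈ Finset.range k0, (a i (toIdx n (j + 1)) - a i (toIdx n j)) := by
        refine Finset.sum_congr rfl fun j hj => ?_
        rw [Finset.mem_range] at hj
        have hz1 : z i (toIdx n (j + 1)) = 1 := by
          apply (hface i).1
          rw [toIdx_val (by omega)]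
          omega
        simp only [hg]; rw [hz1, mul_one]
      have h2 : (0:ℝ) ≤ ∑ j ∈ Finset.Ico k0 n, g j := by
        apply Finset.sum_nonneg
        intro j hj
        rw [Finset.mem_Ico] at hj
        exact hgpos j hj.2
      rw [h1, htel k0]
      linarith
    · -- upper bound
      simp only [Fmap]
      rw [hsum, hsplit k1 hk1n, (hΔ i).1, mul_one, ha0]
      have h1 : (∑ j ∈ Finset.range k1, g j)
          ≤ ∑ j ∈ Finset.range k1, (a i (toIdx n (j + 1)) - a i (toIdx n j)) := by
        refine Finset.sum_le_sum fun j hj => ?_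
        rw [Finset.mem_range] at hj
        have hjn : j < n := lt_of_lt_of_le hj hk1n
        have hd' : 0 ≤ a i (toIdx n (j + 1)) - a i (toIdx n j) := by
          have : toIdx n j < toIdx n (j + 1) := by
            rw [Fin.lt_def, toIdx_val (le_of_lt hjn), toIdx_val hjn]
            omega
          linarith [ha i this]
        simp only [hg]
        calc (a i (toIdx n (j + 1)) - a i (toIdx n j)) * z i (toIdx n (j + 1))
            ≤ (a i (toIdx n (j + 1)) - a i (toIdx n j)) * 1 :=
              mul_le_mul_of_nonneg_left (memDelta_le_one hΔ i _) hd'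
          _ = _ := mul_one _
      have h2 : (∑ j ∈ Finset.Ico k1 n, g j) = 0 := by
        apply Finset.sum_eq_zero
        intro j hj
        rw [Finset.mem_Ico] at hj
        have hz0 : z i (toIdx n (j + 1)) = 0 := by
          apply (hface i).2
          rw [toIdx_val (by omega)]
          omega
        simp only [hg]; rw [hz0, mul_zero]
      rw [htel k1] at h1
      linarith
end
end

section
/- Let S ⊆ ℝ^n × ℝ^m be a convex set (points written (x,y)) and let j, k ∈ {1,…,m}. Suppose that every extreme point (x,y) of S has y ∈ ℤ^m, and that every extreme point (x,y) of S ∩ {(x,y) : y_j = y_k} has y ∈ ℤ^m. Let Ŝ := { (x,y,δ) ∈ S × ℝ : y_j ≤ δ ≤ y_k } and assume Ŝ ≠ ∅. Then every extreme point (x,y,δ) of Ŝ satisfies (y,δ) ∈ ℤ^{m+1}. -/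
noncomputable section

theorem statement_14
    (n m : ℕ)
    (S : Set ((Fin n → ℝ) × (Fin m → ℝ))) (hS : Convex ℝ S)
    (j k : Fin m)
    (hvert : ∀ p ∈ Set.extremePoints ℝ S, ∀ i : Fin m, ∃ z : ℤ, p.2 i = z)
    (hvert' : ∀ p ∈ Set.extremePoints ℝ (S ∩ {p | p.2 j = p.2 k}),
      ∀ i : Fin m, ∃ z : ℤ, p.2 i = z)
    (hne : {q : ((Fin n → ℝ) × (Fin m → ℝ)) × ℝ |
      q.1 ∈ S ∧ q.1.2 j ≤ q.2 ∧ q.2 ≤ q.1.2 k}.Nonempty) :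
    ∀ q ∈ Set.extremePoints ℝ
        {q : ((Fin n → ℝ) × (Fin m → ℝ)) × ℝ |
          q.1 ∈ S ∧ q.1.2 j ≤ q.2 ∧ q.2 ≤ q.1.2 k},
      (∀ i : Fin m, ∃ z : ℤ, q.1.2 i = z) ∧ ∃ z : ℤ, q.2 = z := by
  intro q hq
  obtain ⟨⟨hqS, hqj, hqk⟩, hqe⟩ := hq
  -- Step 1: δ must hit one of the bounds
  have hδ : q.2 = q.1.2 j ∨ q.2 = q.1.2 k := by
    by_contra h
    push_neg at h
    obtain ⟨h1, h2⟩ := h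
    have hj : q.1.2 j < q.2 := lt_of_le_of_ne hqj (Ne.symm h1)
    have hk : q.2 < q.1.2 k := lt_of_le_of_ne hqk h2
    set ε := min (q.2 - q.1.2 j) (q.1.2 k - q.2) with hε
    have hε0 : 0 < ε := lt_min (by linarith) (by linarith)
    have hεj : q.1.2 j ≤ q.2 - ε := by
      have h := min_le_left (q.2 - q.1.2 j) (q.1.2 k - q.2)
      rw [← hε] at h; linarith
    have hεk : q.2 + ε ≤ q.1.2 k := by
      have h := min_le_right (q.2 - q.1.2 j) (q.1.2 k - q.2)
      rw [← hε] at h; linarith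
    have hm1 : (q.1, q.2 - ε) ∈ {q : ((Fin n → ℝ) × (Fin m → ℝ)) × ℝ |
        q.1 ∈ S ∧ q.1.2 j ≤ q.2 ∧ q.2 ≤ q.1.2 k} := ⟨hqS, hεj, by dsimp only; linarith⟩
    have hm2 : (q.1, q.2 + ε) ∈ {q : ((Fin n → ℝ) × (Fin m → ℝ)) × ℝ |
        q.1 ∈ S ∧ q.1.2 j ≤ q.2 ∧ q.2 ≤ q.1.2 k} := ⟨hqS, by dsimp only; linarith, hεk⟩
    have hmem := hqe hm1 hm2 ⟨1/2, 1/2, by norm_num, by norm_num, by norm_num, by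
      refine Prod.ext ?_ ?_
      · show (1/2:ℝ) • q.1 + (1/2:ℝ) • q.1 = q.1
        module
      · show (1/2:ℝ) * (q.2 - ε) + (1/2:ℝ) * (q.2 + ε) = q.2
        ring⟩
    have h' := congrArg Prod.snd hmem
    simp only [] at h'
    have : q.2 - ε = q.2 := h'
    linarith
  by_cases hjk : q.1.2 j = q.1.2 k
  · -- Case y_j = y_k
    have hδj : q.2 = q.1.2 j := by
      rcases hδ with h | h
      · exact h
      · rw [h, hjk]
    have hext : q.1 ∈ Set.extremePoints ℝ (S ∩ {p | p.2 j = p.2 k}) := by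
      refine ⟨⟨hqS, hjk⟩, ?_⟩
      rintro p₁ ⟨hp₁S, hp₁e⟩ p₂ ⟨hp₂S, hp₂e⟩ ⟨a, b, ha, hb, hab, hsum⟩
      have hm1 : (p₁, p₁.2 j) ∈ {q : ((Fin n → ℝ) × (Fin m → ℝ)) × ℝ |
          q.1 ∈ S ∧ q.1.2 j ≤ q.2 ∧ q.2 ≤ q.1.2 k} := ⟨hp₁S, le_refl _, le_of_eq hp₁e⟩
      have hm2 : (p₂, p₂.2 j) ∈ {q : ((Fin n → ℝ) × (Fin m → ℝ)) × ℝ |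
          q.1 ∈ S ∧ q.1.2 j ≤ q.2 ∧ q.2 ≤ q.1.2 k} := ⟨hp₂S, le_refl _, le_of_eq hp₂e⟩
      have hsnd : a * p₁.2 j + b * p₂.2 j = q.2 := by
        rw [hδj, ← hsum]
        simp [smul_eq_mul]
      have h := hqe hm1 hm2 ⟨a, b, ha, hb, hab, by
        refine Prod.ext ?_ ?_
        · simpa using hsum
        · simpa using hsnd⟩
      exact congrArg Prod.fst h
    refine ⟨hvert' _ hext, ?_⟩
    obtain ⟨z, hz⟩ := hvert' _ hext j
    exact ⟨z, by rw [hδj, hz]⟩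
  · -- Case y_j < y_k
    have hjk' : q.1.2 j < q.1.2 k := lt_of_le_of_ne (le_trans hqj hqk) hjk
    obtain ⟨c, hcjk, hδc⟩ : ∃ c : Fin m, (c = j ∨ c = k) ∧ q.2 = q.1.2 c := by
      rcases hδ with h | h
      · exact ⟨j, Or.inl rfl, h⟩
      · exact ⟨k, Or.inr rfl, h⟩
    have hext : q.1 ∈ Set.extremePoints ℝ S := by
      refine ⟨hqS, ?_⟩
      rintro p₁ hp₁ p₂ hp₂ ⟨a, b, ha, hb, hab, hsum⟩
      have hD0 : (0:ℝ) < q.1.2 k - q.1.2 j := by linarith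
      set C := max (p₁.2 j - p₁.2 k) (p₂.2 j - p₂.2 k) with hC
      set t := min (1/2 : ℝ) ((q.1.2 k - q.1.2 j) / (2 * (|C| + 1))) with ht
      have habs : (0:ℝ) ≤ |C| := abs_nonneg C
      have ht0 : 0 < t := lt_min (by norm_num) (by positivity)
      have hthalf : t ≤ 1/2 := min_le_left _ _
      have htD : t * (|C| + 1) ≤ (q.1.2 k - q.1.2 j) / 2 := by
        have h1 : t ≤ (q.1.2 k - q.1.2 j) / (2 * (|C| + 1)) := min_le_right _ _
        have h2 : (0:ℝ) < |C| + 1 := by positivity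
        calc t * (|C| + 1) ≤ ((q.1.2 k - q.1.2 j) / (2 * (|C| + 1))) * (|C| + 1) :=
              mul_le_mul_of_nonneg_right h1 h2.le
          _ = (q.1.2 k - q.1.2 j) / 2 := by field_simp
      have htC : t * C ≤ (1 - t) * (q.1.2 k - q.1.2 j) := by
        nlinarith [mul_le_mul_of_nonneg_left (le_abs_self C) ht0.le,
          mul_nonneg (by linarith : (0:ℝ) ≤ 1/2 - t) hD0.le]
      have key : ∀ p : (Fin n → ℝ) × (Fin m → ℝ), p.2 j - p.2 k ≤ C →
          ((1-t) • q.1 + t • p).2 j ≤ ((1-t) • q.1 + t • p).2 k := by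
        intro p hp
        have e1 : ((1-t) • q.1 + t • p).2 j = (1-t) * q.1.2 j + t * p.2 j := by
          simp [smul_eq_mul]
        have e2 : ((1-t) • q.1 + t • p).2 k = (1-t) * q.1.2 k + t * p.2 k := by
          simp [smul_eq_mul]
        rw [e1, e2]
        nlinarith [mul_le_mul_of_nonneg_left hp ht0.le, htC]
      have hmemS : ∀ p ∈ S, (1-t) • q.1 + t • p ∈ S := fun p hp =>
        hS hqS hp (by linarith) ht0.le (by ring)
      set p₁' := (1-t) • q.1 + t • p₁ with hp₁'
      set p₂' := (1-t) • q.1 + t • p₂ with hp₂'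
      have hsum' : a • p₁' + b • p₂' = q.1 := by
        have e : a • p₁' + b • p₂' = ((a + b) * (1 - t)) • q.1 + t • (a • p₁ + b • p₂) := by
          rw [hp₁', hp₂']; module
        rw [e, hab, hsum]; module
      have hjc1 : p₁'.2 j ≤ p₁'.2 k := key p₁ (le_max_left _ _)
      have hjc2 : p₂'.2 j ≤ p₂'.2 k := key p₂ (le_max_right _ _)
      have hm1 : (p₁', p₁'.2 c) ∈ {q : ((Fin n → ℝ) × (Fin m → ℝ)) × ℝ |
          q.1 ∈ S ∧ q.1.2 j ≤ q.2 ∧ q.2 ≤ q.1.2 k} := by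
        refine ⟨hmemS p₁ hp₁, ?_, ?_⟩ <;> rcases hcjk with h | h <;> subst h <;>
          first | exact le_refl _ | exact hjc1
      have hm2 : (p₂', p₂'.2 c) ∈ {q : ((Fin n → ℝ) × (Fin m → ℝ)) × ℝ |
          q.1 ∈ S ∧ q.1.2 j ≤ q.2 ∧ q.2 ≤ q.1.2 k} := by
        refine ⟨hmemS p₂ hp₂, ?_, ?_⟩ <;> rcases hcjk with h | h <;> subst h <;>
          first | exact le_refl _ | exact hjc2
      have hsnd : a * p₁'.2 c + b * p₂'.2 c = q.2 := by
        rw [hδc, ← hsum']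
        simp [smul_eq_mul]
      have h := hqe hm1 hm2 ⟨a, b, ha, hb, hab, by
        refine Prod.ext ?_ ?_
        · simpa using hsum'
        · simpa using hsnd⟩
      have key2 : ∀ p : (Fin n → ℝ) × (Fin m → ℝ), (1-t) • q.1 + t • p = q.1 → p = q.1 := by
        intro p hp
        have e : q.1 - (1 - t) • q.1 = t • q.1 := by module
        have h3 : t • p = t • q.1 := (eq_sub_of_add_eq' hp).trans e
        exact smul_right_injective _ ht0.ne' h3
      exact key2 p₁ (congrArg Prod.fst h)
    refine ⟨hvert _ hext, ?_⟩
    obtain ⟨z, hz⟩ := hvert _ hext c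
    exact ⟨z, by rw [hδc, hz]⟩
end
end
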